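/- Let 0 < y < 1 and let a > 0 with a ∉ [1−√y, 1+√y]; set φ(a) = a + ya/(a−1). Then m₅(φ(a)) = ∫ x/(φ(a)−x)³ dF_y(x) = (a−1)³ / ((a−1)² − y)³. -/

import Mathlib

open MeasureTheory Real

/-- Density of the Marčenko–Pastur distribution with ratio parameter `c` (the absolutely
continuous part; it vanishes outside `[(1-√c)², (1+√c)²]`). -/
noncomputable def mpDensity (c x : ℝ) : ℝ :=
  if (1 - Real.sqrt c) ^ 2 ≤ x ∧ x ≤ (1 + Real.sqrt c) ^ 2 then
    Real.sqrt ((x - (1 - Real.sqrt c) ^ 2) * ((1 + Real.sqrt c) ^ 2 - x)) /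
      (2 * Real.pi * c * x)
  else 0

/-- The Marčenko–Pastur law with ratio parameter `c > 0`: an atom of mass `max (1 - 1/c) 0`
at `0` plus the absolutely continuous part with density `mpDensity c`.  For `c < 1` (in
particular for `c = y ∈ (0,1)`) the atom vanishes and this is the measure `F_y` with density
`(1/(2πxy))√((x-a_y)(b_y-x))` on `[a_y, b_y]`, `a_y = (1-√y)²`, `b_y = (1+√y)²`. -/
noncomputable def mpLaw (c : ℝ) : Measure ℝ :=
  ENNReal.ofReal (1 - 1 / c) • Measure.dirac 0 +
    (volume : Measure ℝ).withDensity fun x => ENNReal.ofReal (mpDensity c x)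

/-- The map `φ(a) = a + ya/(a-1)` sending a spike outside `[1-√y, 1+√y]` to the a.s. limit
of the corresponding extreme sample eigenvalue, outside the Marčenko–Pastur support. -/
noncomputable def phiSpike (y a : ℝ) : ℝ := a + y * a / (a - 1)

/-!
On its support the Marčenko–Pastur density is `(2πyx)⁻¹` times the semicircle of centre
`1 + y` and radius `r = 2√y`, so the factor `x` of the integrand cancels and, with
`p = λ - 1 - y`,
`m₅(λ) = (2πy)⁻¹ ∫_{-r}^{r} √(r² - u²) / (p - u)³ du`. For `r < p` this integral has an
elementary primitive (an arcsin of a Möbius function of `u` plus algebraic terms) and equals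
`π r² / (2 (p² - r²)^{3/2})`; it is odd in `p`. At `λ = φ(a)` one gets the Joukowski form
`p = b + y / b` with `b = a - 1`, so that `p² - r² = (b - y / b)²` and everything collapses to
`b³ / (b² - y)³`.
-/

open Set intervalIntegral

theorem mpLaw_eq_withDensity {c : ℝ} (hc0 : 0 < c) (hc1 : c ≤ 1) :
    mpLaw c = volume.withDensity fun x => ENNReal.ofReal (mpDensity c x) := by
  have hatom : ENNReal.ofReal (1 - 1 / c) = 0 :=
    ENNReal.ofReal_eq_zero.2 (by linarith [(one_le_div₀ hc0).2 hc1])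
  rw [mpLaw, hatom, zero_smul, zero_add]

theorem measurable_mpDensity (c : ℝ) : Measurable (mpDensity c) :=
  Measurable.ite measurableSet_Icc (by fun_prop) measurable_const

theorem mpDensity_nonneg {c : ℝ} (hc : 0 ≤ c) (x : ℝ) : 0 ≤ mpDensity c x := by
  unfold mpDensity
  split_ifs with hx
  · have : 0 ≤ x := (sq_nonneg _).trans hx.1
    positivity
  · exact le_rfl

theorem mpDensity_mul_mul_eq_indicator (c : ℝ) (g : ℝ → ℝ) (x : ℝ) :
    mpDensity c x * (x * g x) =
      (Icc ((1 - √c) ^ 2) ((1 + √c) ^ 2)).indicator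
        (fun t => (2 * π * c)⁻¹ * (√((t - (1 - √c) ^ 2) * ((1 + √c) ^ 2 - t)) * g t)) x := by
  by_cases hx : x ∈ Icc ((1 - √c) ^ 2) ((1 + √c) ^ 2)
  · rw [indicator_of_mem hx, mpDensity, if_pos (mem_Icc.1 hx)]
    -- at `x = 0` the factor `x` does not cancel the junk `1 / 0`, but the root vanishes
    rcases eq_or_ne x 0 with rfl | hx0
    · rw [Real.sqrt_eq_zero_of_nonpos
        (mul_nonpos_of_nonpos_of_nonneg (by nlinarith) (by nlinarith))]
      simp
    · field_simp
  · rw [indicator_of_notMem hx, mpDensity, if_neg (by simpa using hx), zero_mul]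

theorem integral_mul_mpLaw {c : ℝ} (hc0 : 0 < c) (hc1 : c ≤ 1) (g : ℝ → ℝ) :
    ∫ x, x * g x ∂mpLaw c =
      (2 * π * c)⁻¹ * ∫ u in -(2 * √c)..2 * √c, √((2 * √c) ^ 2 - u ^ 2) * g (1 + c + u) := by
  have hsq : √c ^ 2 = c := Real.sq_sqrt hc0.le
  have hA : (1 + c) + -(2 * √c) = (1 - √c) ^ 2 := by rw [sub_sq, hsq]; ring
  have hB : (1 + c) + 2 * √c = (1 + √c) ^ 2 := by rw [add_sq, hsq]; ring
  rw [mpLaw_eq_withDensity hc0 hc1, integral_withDensity_eq_integral_toReal_smul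
    (measurable_mpDensity c).ennreal_ofReal (ae_of_all _ fun _ => ENNReal.ofReal_lt_top)]
  have hAB : (1 - √c) ^ 2 ≤ (1 + √c) ^ 2 := by nlinarith [Real.sqrt_nonneg c]
  simp only [ENNReal.toReal_ofReal (mpDensity_nonneg hc0.le _), smul_eq_mul,
    mpDensity_mul_mul_eq_indicator]
  rw [MeasureTheory.integral_indicator measurableSet_Icc, integral_Icc_eq_integral_Ioc,
    ← integral_of_le hAB, intervalIntegral.integral_const_mul, ← hA, ← hB,
    ← integral_comp_add_left]
  congr 2 with u
  ring_nf

/-- The Möbius map inside `arcsin` sends `-r ↦ 1` and `r ↦ -1`, so that term changes by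
`π r² / (2 (p² - r²)^{3/2})` across `[-r, r]`. -/
noncomputable def semicircleCubicPrimitive (r p u : ℝ) : ℝ :=
  -(r ^ 2 / (2 * (p ^ 2 - r ^ 2) * √(p ^ 2 - r ^ 2)))
      * arcsin ((r ^ 2 - p * u) / (r * (p - u)))
    + √(r ^ 2 - u ^ 2) * (1 / (2 * (p - u) ^ 2) - p / (2 * (p ^ 2 - r ^ 2) * (p - u)))

section SemicircleCubic

variable {r p u : ℝ}

theorem hasDerivAt_arcsin_mobius (hr : 0 < r) (hp : r < p) (hu : u ∈ Ioo (-r) r) :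
    HasDerivAt (fun v => arcsin ((r ^ 2 - p * v) / (r * (p - v))))
      (-√(p ^ 2 - r ^ 2) / ((p - u) * √(r ^ 2 - u ^ 2))) u := by
  obtain ⟨hu₁, hu₂⟩ := hu
  have hpu : 0 < p - u := by linarith
  have hD : 0 < p ^ 2 - r ^ 2 := by nlinarith
  have hw : 0 < r ^ 2 - u ^ 2 := by nlinarith
  have hmob : HasDerivAt (fun v => (r ^ 2 - p * v) / (r * (p - v)))
      (-(p ^ 2 - r ^ 2) / (r * (p - u) ^ 2)) u := by
    refine (((hasDerivAt_id' u).const_mul p).const_sub (r ^ 2)).div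
      (((hasDerivAt_id' u).const_sub p).const_mul r) (by positivity) |>.congr_deriv ?_
    field_simp
    ring
  have hsq : 1 - ((r ^ 2 - p * u) / (r * (p - u))) ^ 2
      = (√(p ^ 2 - r ^ 2) * √(r ^ 2 - u ^ 2) / (r * (p - u))) ^ 2 := by
    rw [div_pow, div_pow, mul_pow √_, Real.sq_sqrt hD.le, Real.sq_sqrt hw.le]
    field_simp
    ring
  have hlt : ((r ^ 2 - p * u) / (r * (p - u))) ^ 2 < 1 := by
    have : 0 < (√(p ^ 2 - r ^ 2) * √(r ^ 2 - u ^ 2) / (r * (p - u))) ^ 2 := by positivity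
    linarith
  obtain ⟨hne₁, hne₂⟩ : (r ^ 2 - p * u) / (r * (p - u)) ≠ -1 ∧
      (r ^ 2 - p * u) / (r * (p - u)) ≠ 1 := by
    constructor <;> rintro h <;> rw [h] at hlt <;> norm_num at hlt
  refine (Real.hasDerivAt_arcsin hne₁ hne₂).comp u hmob |>.congr_deriv ?_
  rw [hsq, Real.sqrt_sq (by positivity)]
  field_simp
  rw [Real.sq_sqrt hD.le]

theorem hasDerivAt_semicircleCubicPrimitive (hr : 0 < r) (hp : r < p) (hu : u ∈ Ioo (-r) r) :
    HasDerivAt (semicircleCubicPrimitive r p) (√(r ^ 2 - u ^ 2) / (p - u) ^ 3) u := by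
  have hpu : 0 < p - u := by linarith [hu.2]
  have hD : 0 < p ^ 2 - r ^ 2 := by nlinarith
  have hw : 0 < r ^ 2 - u ^ 2 := by nlinarith [hu.1, hu.2]
  have hsqrt : HasDerivAt (fun v => √(r ^ 2 - v ^ 2)) (-u / √(r ^ 2 - u ^ 2)) u := by
    refine ((hasDerivAt_pow 2 u).const_sub (r ^ 2)).sqrt hw.ne' |>.congr_deriv ?_
    field_simp
    ring
  have hrat : HasDerivAt (fun v => 1 / (2 * (p - v) ^ 2) - p / (2 * (p ^ 2 - r ^ 2) * (p - v)))
      (1 / (p - u) ^ 3 - p / (2 * (p ^ 2 - r ^ 2) * (p - u) ^ 2)) u := by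
    have hlin := (hasDerivAt_id' u).const_sub p
    refine ((hasDerivAt_const u (1 : ℝ)).div ((hlin.pow 2).const_mul 2)
      (by simp only [Pi.pow_apply]; positivity)).sub
      ((hasDerivAt_const u p).div (hlin.const_mul (2 * (p ^ 2 - r ^ 2))) (by nlinarith))
      |>.congr_deriv ?_
    simp only [Pi.pow_apply]
    field_simp
    ring
  refine ((hasDerivAt_arcsin_mobius hr hp hu).const_mul _).add (hsqrt.mul hrat) |>.congr_deriv ?_
  have hw2 : √(r ^ 2 - u ^ 2) ^ 2 = r ^ 2 - u ^ 2 := Real.sq_sqrt hw.le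
  field_simp
  rw [hw2]
  ring

theorem continuousOn_semicircleCubicPrimitive (hr : 0 < r) (hp : r < p) :
    ContinuousOn (semicircleCubicPrimitive r p) (Icc (-r) r) := by
  have hpu : ∀ u ∈ Icc (-r) r, p - u ≠ 0 := fun u hu => by linarith [hu.2]
  have hD : p ^ 2 - r ^ 2 ≠ 0 := by nlinarith
  unfold semicircleCubicPrimitive
  refine (continuousOn_const.mul (continuous_arcsin.comp_continuousOn ?_)).add ?_
  · fun_prop (disch := intro u hu; simp [hpu u hu, hr.ne'])
  · fun_prop (disch := intro u hu; simp [hpu u hu, hD])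

theorem semicircleCubicPrimitive_self (hr : 0 < r) (hp : r < p) :
    semicircleCubicPrimitive r p r
      = π * r ^ 2 / (2 * (p ^ 2 - r ^ 2) * √(p ^ 2 - r ^ 2)) / 2 := by
  have : (r ^ 2 - p * r) / (r * (p - r)) = -1 := by
    rw [div_eq_iff (mul_pos hr (sub_pos.2 hp)).ne']
    ring
  simp only [semicircleCubicPrimitive, this, arcsin_neg_one, sub_self, Real.sqrt_zero]
  ring

theorem semicircleCubicPrimitive_neg_self (hr : 0 < r) (hp : r < p) :
    semicircleCubicPrimitive r p (-r)
      = -(π * r ^ 2 / (2 * (p ^ 2 - r ^ 2) * √(p ^ 2 - r ^ 2)) / 2) := by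
  have : (r ^ 2 - p * -r) / (r * (p - -r)) = 1 := by
    rw [div_eq_iff (mul_pos hr (by linarith)).ne']
    ring
  simp only [semicircleCubicPrimitive, this, arcsin_one, neg_sq, sub_self, Real.sqrt_zero]
  ring

theorem integral_sqrt_sq_sub_sq_div_sub_pow_three (hr : 0 < r) (hp : r < p) :
    ∫ u in -r..r, √(r ^ 2 - u ^ 2) / (p - u) ^ 3
      = π * r ^ 2 / (2 * (p ^ 2 - r ^ 2) * √(p ^ 2 - r ^ 2)) := by
  have hpu : ∀ u ∈ Icc (-r) r, p - u ≠ 0 := fun u hu => by linarith [hu.2]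
  have hint : IntervalIntegrable (fun u => √(r ^ 2 - u ^ 2) / (p - u) ^ 3) volume (-r) r := by
    refine ContinuousOn.intervalIntegrable ?_
    rw [uIcc_of_le (by linarith)]
    fun_prop (disch := intro u hu; simp [hpu u hu])
  rw [integral_eq_sub_of_hasDerivAt_of_le (by linarith)
    (continuousOn_semicircleCubicPrimitive hr hp)
    (fun u hu => hasDerivAt_semicircleCubicPrimitive hr hp hu) hint,
    semicircleCubicPrimitive_self hr hp, semicircleCubicPrimitive_neg_self hr hp]
  ring

theorem integral_sqrt_sq_sub_sq_div_neg_sub_pow_three :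
    ∫ u in -r..r, √(r ^ 2 - u ^ 2) / (-p - u) ^ 3
      = -∫ u in -r..r, √(r ^ 2 - u ^ 2) / (p - u) ^ 3 := by
  have hrefl := integral_comp_neg (a := -r) (b := r) fun u => √(r ^ 2 - u ^ 2) / (-p - u) ^ 3
  rw [neg_neg] at hrefl
  rw [← hrefl, ← intervalIntegral.integral_neg]
  congr 1 with u
  rw [neg_sq, show -p - -u = -(p - u) by ring, Odd.neg_pow (by decide), div_neg]

end SemicircleCubic

theorem integral_sqrt_sq_sub_sq_div_joukowski_pow_three {s b : ℝ} (hs : 0 < s) (hb : s < |b|) :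
    ∫ u in -(2 * s)..2 * s, √((2 * s) ^ 2 - u ^ 2) / (b + s ^ 2 / b - u) ^ 3
      = 2 * π * s ^ 2 * b ^ 3 / (b ^ 2 - s ^ 2) ^ 3 := by
  have hpos : ∀ b, s < b →
      ∫ u in -(2 * s)..2 * s, √((2 * s) ^ 2 - u ^ 2) / (b + s ^ 2 / b - u) ^ 3
        = 2 * π * s ^ 2 * b ^ 3 / (b ^ 2 - s ^ 2) ^ 3 := by
    intro b hb
    have hb0 : 0 < b := hs.trans hb
    have hgap : 0 < b - s ^ 2 / b := by
      rw [sub_pos, div_lt_iff₀ hb0]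
      nlinarith
    have hp : 2 * s < b + s ^ 2 / b := by
      have : b + s ^ 2 / b - 2 * s = (b - s) ^ 2 / b := by field_simp; ring
      linarith [div_pos (pow_pos (sub_pos.2 hb) 2) hb0]
    have hdisc : (b + s ^ 2 / b) ^ 2 - (2 * s) ^ 2 = (b - s ^ 2 / b) ^ 2 := by
      field_simp
      ring
    rw [integral_sqrt_sq_sub_sq_div_sub_pow_three (by positivity) hp, hdisc, Real.sqrt_sq hgap.le]
    field_simp
  rcases lt_abs.1 hb with hb | hb
  · exact hpos b hb
  · have hneg : b + s ^ 2 / b = -(-b + s ^ 2 / -b) := by ring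
    rw [hneg, integral_sqrt_sq_sub_sq_div_neg_sub_pow_three, hpos (-b) hb]
    ring

theorem mp_m5_phi_general (y a : ℝ) (hy0 : 0 < y) (hy1 : y < 1)
    (hout : a ∉ Set.Icc (1 - Real.sqrt y) (1 + Real.sqrt y)) :
    (∫ x, x / (phiSpike y a - x) ^ 3 ∂mpLaw y) = (a - 1) ^ 3 / ((a - 1) ^ 2 - y) ^ 3 := by
  have hs : √y ^ 2 = y := Real.sq_sqrt hy0.le
  have hb : √y < |a - 1| := by
    rw [mem_Icc, not_and_or, not_le, not_le] at hout
    exact lt_abs.2 (hout.symm.imp (by intro h; linarith) (by intro h; linarith))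
  have ha : a - 1 ≠ 0 := abs_pos.1 ((Real.sqrt_nonneg y).trans_lt hb)
  have hshift : ∀ u, phiSpike y a - (1 + y + u) = (a - 1) + √y ^ 2 / (a - 1) - u := by
    intro u
    rw [hs, phiSpike]
    field_simp
    ring
  calc ∫ x, x / (phiSpike y a - x) ^ 3 ∂mpLaw y
      = ∫ x, x * ((phiSpike y a - x) ^ 3)⁻¹ ∂mpLaw y := by simp only [div_eq_mul_inv]
    _ = (2 * π * y)⁻¹ * ∫ u in -(2 * √y)..2 * √y,
          √((2 * √y) ^ 2 - u ^ 2) / ((a - 1) + √y ^ 2 / (a - 1) - u) ^ 3 := by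
        rw [integral_mul_mpLaw hy0 hy1.le]
        simp only [hshift, div_eq_mul_inv]
    _ = (a - 1) ^ 3 / ((a - 1) ^ 2 - y) ^ 3 := by
        rw [integral_sqrt_sq_sub_sq_div_joukowski_pow_three (Real.sqrt_pos.2 hy0) hb, hs]
        field_simp

/-- `m₅(φ(a)) = ∫ x/(φ(a)−x)³ dF_y(x) = (a−1)³ / ((a−1)²−y)³`. -/
theorem mp_m5_phi (y a : ℝ) (hy0 : 0 < y) (hy1 : y < 1) (ha : 0 < a)
    (hout : a ∉ Set.Icc (1 - Real.sqrt y) (1 + Real.sqrt y)) :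
    (∫ x, x / (phiSpike y a - x) ^ 3 ∂mpLaw y) = (a - 1) ^ 3 / ((a - 1) ^ 2 - y) ^ 3 :=
  mp_m5_phi_general y a hy0 hy1 hout
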